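/- arXiv:1901.04887 — 3 statements merged into one kernel-verified Lean document; each statement's English description precedes it below -/
import Mathlib

section
/- Let X be a topological space and κ an infinite cardinal. Suppose 𝒞 is a cover of X such that |𝒞| ≤ 2^κ and every C ∈ 𝒞 is dense in X and has subspace tightness t(C) ≤ κ. If t(X) ≤ 2^κ or πχ(X) ≤ 2^κ, then wt(X) ≤ κ. -/
/-! A dense set `C` has `cl_μ(C) = X` as soon as every point `x` lies in the closure of at most
`μ` points of `C`. With `t(X) ≤ 2^κ` this is tightness applied to `x ∈ closure C`; with
`πχ(X) ≤ 2^κ` pick one point of `C` in each member of a π-base at `x`. So the given cover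
itself witnesses `wt(X) ≤ κ`. -/

open Cardinal Set Topology
universe u
noncomputable section

/-- The tightness of a space: the least infinite cardinal `τ` such that whenever
`y ∈ closure A` there is `B ⊆ A` with `#B ≤ τ` and `y ∈ closure B`. -/
def tightness (Y : Type u) [TopologicalSpace Y] : Cardinal.{u} :=
  sInf {τ : Cardinal.{u} | ℵ₀ ≤ τ ∧ ∀ (A : Set Y) (y : Y), y ∈ closure A →
    ∃ B ⊆ A, #B ≤ τ ∧ y ∈ closure B}

/-- The `μ`-closure of a set `A`: the union of the closures of all subsets of `A`
of cardinality at most `μ`. -/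
def kClosure {X : Type u} [TopologicalSpace X] (μ : Cardinal.{u}) (A : Set X) : Set X :=
  ⋃ B ∈ {B : Set X | B ⊆ A ∧ #B ≤ μ}, closure B

/-- `𝒞` witnesses that the weak tightness of `X` is at most `κ`. -/
def IsWeakTightnessWitness (X : Type u) [TopologicalSpace X] (κ : Cardinal.{u})
    (𝒞 : Set (Set X)) : Prop :=
  ⋃₀ 𝒞 = Set.univ ∧ #𝒞 ≤ 2 ^ κ ∧ ∀ C ∈ 𝒞, tightness C ≤ κ ∧ kClosure (2 ^ κ) C = Set.univ

/-- The weak tightness of `X`: the least infinite cardinal `κ` for which there is a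
cover `𝒞` of `X` with `#𝒞 ≤ 2^κ` such that each `C ∈ 𝒞` has tightness at most `κ`
and `X = cl_{2^κ} C`. -/
def weakTightness (X : Type u) [TopologicalSpace X] : Cardinal.{u} :=
  sInf {κ : Cardinal.{u} | ℵ₀ ≤ κ ∧ ∃ 𝒞 : Set (Set X), IsWeakTightnessWitness X κ 𝒞}

/-- The π-character of a point `x`: the least cardinality of a family of nonempty
open sets such that every neighborhood of `x` contains a member of the family. -/
def piCharacterAt {X : Type u} [TopologicalSpace X] (x : X) : Cardinal.{u} :=
  sInf {c : Cardinal.{u} | ∃ 𝒰 : Set (Set X), #𝒰 = c ∧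
    (∀ U ∈ 𝒰, IsOpen U ∧ U.Nonempty) ∧ ∀ N ∈ nhds x, ∃ U ∈ 𝒰, U ⊆ N}

/-- The π-character of a space: the supremum of the π-characters at its points
(at least `ℵ₀`). -/
def piCharacter (X : Type u) [TopologicalSpace X] : Cardinal.{u} :=
  max ℵ₀ (⨆ x : X, piCharacterAt x)

/-- The Lindelöf degree: the least infinite cardinal `κ` such that every open cover
has a subcover of cardinality at most `κ`. -/
def lindelofDegree (X : Type u) [TopologicalSpace X] : Cardinal.{u} :=
  sInf {κ : Cardinal.{u} | ℵ₀ ≤ κ ∧ ∀ 𝒰 : Set (Set X), (∀ U ∈ 𝒰, IsOpen U) →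
    ⋃₀ 𝒰 = Set.univ → ∃ 𝒱 ⊆ 𝒰, #𝒱 ≤ κ ∧ ⋃₀ 𝒱 = Set.univ}

/-- The density of `X`: the least infinite cardinality of a dense subset. -/
def density (X : Type u) [TopologicalSpace X] : Cardinal.{u} :=
  sInf {c : Cardinal.{u} | ℵ₀ ≤ c ∧ ∃ D : Set X, Dense D ∧ #D ≤ c}

/-- The pseudocharacter of a subset `F` of `X`: the least infinite cardinality
of a family of open sets whose intersection is `F`. -/
def setPseudoCharacter {X : Type u} [TopologicalSpace X] (F : Set X) : Cardinal.{u} :=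
  sInf {κ : Cardinal.{u} | ℵ₀ ≤ κ ∧ ∃ 𝒰 : Set (Set X), #𝒰 ≤ κ ∧
    (∀ U ∈ 𝒰, IsOpen U) ∧ ⋂₀ 𝒰 = F}

/-- The pseudocharacter of a space: the least infinite `κ` such that every singleton
is the intersection of at most `κ` open sets. -/
def pseudoCharacter (X : Type u) [TopologicalSpace X] : Cardinal.{u} :=
  sInf {κ : Cardinal.{u} | ℵ₀ ≤ κ ∧ ∀ x : X, ∃ 𝒰 : Set (Set X), #𝒰 ≤ κ ∧
    (∀ U ∈ 𝒰, IsOpen U) ∧ ⋂₀ 𝒰 = {x}}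

/-- The character of a (closed) set `G` in `X`: the least infinite cardinality of a
family `𝒰` of open sets containing `G` such that every open set containing `G`
contains a member of `𝒰`. -/
def setCharacter {X : Type u} [TopologicalSpace X] (G : Set X) : Cardinal.{u} :=
  sInf {κ : Cardinal.{u} | ℵ₀ ≤ κ ∧ ∃ 𝒰 : Set (Set X), #𝒰 ≤ κ ∧
    (∀ U ∈ 𝒰, IsOpen U ∧ G ⊆ U) ∧ ∀ V : Set X, IsOpen V → G ⊆ V → ∃ U ∈ 𝒰, U ⊆ V}

/-- A cardinal `λ` is a caliber of `X` if every `λ`-indexed family of nonempty open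
sets has a subfamily of cardinality `λ` with nonempty intersection. -/
def IsCaliber (X : Type u) [TopologicalSpace X] (lam : Cardinal.{u}) : Prop :=
  ∀ (ι : Type u) (U : ι → Set X), #ι = lam → (∀ i, IsOpen (U i) ∧ (U i).Nonempty) →
    ∃ J : Set ι, #J = lam ∧ (⋂ i ∈ J, U i).Nonempty

/-- A space is quasiregular if every nonempty open set contains the closure of a
nonempty open set. -/
def Quasiregular (X : Type u) [TopologicalSpace X] : Prop :=
  ∀ U : Set X, IsOpen U → U.Nonempty → ∃ V : Set X, IsOpen V ∧ V.Nonempty ∧ closure V ⊆ U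

/-- The θ-closure of a set `A`. -/
def thetaClosure {X : Type u} [TopologicalSpace X] (A : Set X) : Set X :=
  {x : X | ∀ U : Set X, IsOpen U → x ∈ U → (closure U ∩ A).Nonempty}

/-- The θ-density of `X`: the least infinite cardinality of a θ-dense subset. -/
def thetaDensity (X : Type u) [TopologicalSpace X] : Cardinal.{u} :=
  sInf {c : Cardinal.{u} | ℵ₀ ≤ c ∧ ∃ D : Set X, thetaClosure D = Set.univ ∧ #D ≤ c}

/-- The linear Lindelöf degree: the least infinite cardinal `κ` such that every open
cover totally ordered by inclusion has a subcover of cardinality at most `κ`. -/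
def linearLindelofDegree (X : Type u) [TopologicalSpace X] : Cardinal.{u} :=
  sInf {κ : Cardinal.{u} | ℵ₀ ≤ κ ∧ ∀ 𝒰 : Set (Set X), (∀ U ∈ 𝒰, IsOpen U) →
    IsChain (· ⊆ ·) 𝒰 → ⋃₀ 𝒰 = Set.univ → ∃ 𝒱 ⊆ 𝒰, #𝒱 ≤ κ ∧ ⋃₀ 𝒱 = Set.univ}

/-- The almost Lindelöf degree with respect to closed sets. -/
def almostLindelofDegreeClosed (X : Type u) [TopologicalSpace X] : Cardinal.{u} :=
  sInf {κ : Cardinal.{u} | ℵ₀ ≤ κ ∧ ∀ (F : Set X) (𝒱 : Set (Set X)), IsClosed F →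
    (∀ V ∈ 𝒱, IsOpen V) → F ⊆ ⋃₀ 𝒱 →
    ∃ 𝒱' ⊆ 𝒱, #𝒱' ≤ κ ∧ F ⊆ ⋃ V ∈ 𝒱', closure V}

/-- The closed pseudocharacter of a space. -/
def closedPseudoCharacter (X : Type u) [TopologicalSpace X] : Cardinal.{u} :=
  sInf {κ : Cardinal.{u} | ℵ₀ ≤ κ ∧ ∀ x : X, ∃ 𝒰 : Set (Set X), #𝒰 ≤ κ ∧
    (∀ U ∈ 𝒰, IsOpen U ∧ x ∈ U) ∧ ⋂ U ∈ 𝒰, closure U = {x}}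

section

variable {X : Type u} [TopologicalSpace X]

theorem exists_subset_card_le_tightness_mem_closure {A : Set X} {y : X} (hy : y ∈ closure A) :
    ∃ B ⊆ A, #B ≤ tightness X ∧ y ∈ closure B := by
  have hne : {τ : Cardinal.{u} | ℵ₀ ≤ τ ∧ ∀ (A : Set X) (y : X), y ∈ closure A →
      ∃ B ⊆ A, #B ≤ τ ∧ y ∈ closure B}.Nonempty :=
    ⟨max ℵ₀ #X, le_max_left _ _, fun A _ hy =>
      ⟨A, subset_rfl, (mk_set_le A).trans (le_max_right _ _), hy⟩⟩
  exact (csInf_mem hne).2 A y hy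

theorem exists_piBase_card_eq_piCharacterAt (x : X) :
    ∃ 𝒰 : Set (Set X), #𝒰 = piCharacterAt x ∧
      (∀ U ∈ 𝒰, IsOpen U ∧ U.Nonempty) ∧ ∀ N ∈ 𝓝 x, ∃ U ∈ 𝒰, U ⊆ N := by
  refine csInf_mem (⟨_, {U | IsOpen U ∧ U.Nonempty}, rfl, fun _ hU => hU, fun N hN => ?_⟩ :
    Set.Nonempty {c : Cardinal.{u} | ∃ 𝒰 : Set (Set X), #𝒰 = c ∧
      (∀ U ∈ 𝒰, IsOpen U ∧ U.Nonempty) ∧ ∀ N ∈ 𝓝 x, ∃ U ∈ 𝒰, U ⊆ N})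
  obtain ⟨U, hUN, hUo, hxU⟩ := mem_nhds_iff.mp hN
  exact ⟨U, ⟨hUo, x, hxU⟩, hUN⟩

theorem piCharacterAt_le_piCharacter (x : X) : piCharacterAt x ≤ piCharacter X :=
  (le_ciSup bddAbove_of_small x).trans (le_max_right _ _)

theorem Dense.exists_subset_card_le_piCharacterAt_mem_closure {C : Set X} (hC : Dense C)
    (x : X) : ∃ B ⊆ C, #B ≤ piCharacterAt x ∧ x ∈ closure B := by
  obtain ⟨𝒰, h𝒰card, h𝒰open, h𝒰base⟩ := exists_piBase_card_eq_piCharacterAt x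
  have hmeet : ∀ U : 𝒰, ((U : Set X) ∩ C).Nonempty := fun U =>
    hC.inter_open_nonempty U (h𝒰open U U.2).1 (h𝒰open U U.2).2
  choose f hfU hfC using hmeet
  refine ⟨range f, range_subset_iff.mpr hfC, h𝒰card ▸ mk_range_le, ?_⟩
  rw [mem_closure_iff]
  intro O hO hxO
  obtain ⟨U, hU𝒰, hUO⟩ := h𝒰base O (hO.mem_nhds hxO)
  exact ⟨f ⟨U, hU𝒰⟩, hUO (hfU ⟨U, hU𝒰⟩), mem_range_self _⟩

theorem kClosure_eq_univ_of_forall {μ : Cardinal.{u}} {C : Set X}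
    (h : ∀ x, ∃ B ⊆ C, #B ≤ μ ∧ x ∈ closure B) : kClosure μ C = Set.univ :=
  eq_univ_of_forall fun x => by
    obtain ⟨B, hBC, hB, hxB⟩ := h x
    exact mem_biUnion ⟨hBC, hB⟩ hxB

theorem Dense.kClosure_eq_univ_of_tightness_le {μ : Cardinal.{u}} {C : Set X} (hC : Dense C)
    (ht : tightness X ≤ μ) : kClosure μ C = Set.univ :=
  kClosure_eq_univ_of_forall fun x => by
    obtain ⟨B, hBC, hB, hxB⟩ := exists_subset_card_le_tightness_mem_closure (hC x)
    exact ⟨B, hBC, hB.trans ht, hxB⟩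

theorem Dense.kClosure_eq_univ_of_piCharacter_le {μ : Cardinal.{u}} {C : Set X} (hC : Dense C)
    (hπ : piCharacter X ≤ μ) : kClosure μ C = Set.univ :=
  kClosure_eq_univ_of_forall fun x => by
    obtain ⟨B, hBC, hB, hxB⟩ := hC.exists_subset_card_le_piCharacterAt_mem_closure x
    exact ⟨B, hBC, hB.trans ((piCharacterAt_le_piCharacter x).trans hπ), hxB⟩

theorem IsWeakTightnessWitness.weakTightness_le {κ : Cardinal.{u}} (hκ : ℵ₀ ≤ κ)
    {𝒞 : Set (Set X)} (h𝒞 : IsWeakTightnessWitness X κ 𝒞) : weakTightness X ≤ κ :=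
  csInf_le' ⟨hκ, 𝒞, h𝒞⟩

end

/-- If `𝒞` is a cover of `X` with `#𝒞 ≤ 2^κ`, each member dense in `X`
with subspace tightness at most `κ`, and `t(X) ≤ 2^κ` or `πχ(X) ≤ 2^κ`,
then `wt(X) ≤ κ`. -/
theorem weakTightness_le_of_dense_cover (X : Type u) [TopologicalSpace X]
    (κ : Cardinal.{u}) (hκ : ℵ₀ ≤ κ)
    (𝒞 : Set (Set X)) (hcov : ⋃₀ 𝒞 = Set.univ) (hcard : #𝒞 ≤ 2 ^ κ)
    (hC : ∀ C ∈ 𝒞, Dense C ∧ tightness C ≤ κ)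
    (h : tightness X ≤ 2 ^ κ ∨ piCharacter X ≤ 2 ^ κ) :
    weakTightness X ≤ κ := by
  have hkClosure : ∀ C : Set X, Dense C → kClosure (2 ^ κ) C = Set.univ := fun C hD =>
    h.elim hD.kClosure_eq_univ_of_tightness_le hD.kClosure_eq_univ_of_piCharacter_le
  exact IsWeakTightnessWitness.weakTightness_le hκ
    ⟨hcov, hcard, fun C hC𝒞 => ⟨(hC C hC𝒞).2, hkClosure C (hC C hC𝒞).1⟩⟩

end
end

section
/- Assume 2^ℵ₀ = 2^ℵ₁. Then the Cantor cube X = 2^{ω₁} (the product of ω₁ copies of the two-point discrete space) satisfies wt(X) = ℵ₀ while t(X) = ℵ₁; in particular X is a compact Hausdorff topological group with wt(X) < t(X). -/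
open Cardinal Set Topology
universe u
noncomputable section

/-!
The cube `2^{ω₁}` is separable by Hewitt–Marczewski–Pondiczery (`ω₁ ≤ 𝔠`), and it has `2^{ℵ₁} = 2^{ℵ₀}`
points; so the sets `D ∪ {x}`, for a countable dense `D`, form a cover of size `2^ℵ₀` by countable
dense sets, which gives `wt = ℵ₀`. Its tightness is at most the number `ℵ₁` of finite sets of
coordinates, and at least `ℵ₁` because the constant function `1` is in the closure of the finitely
supported functions but not of any countable family of them.
-/

universe v w

open Filter TopologicalSpace

section Tightness

variable {Y : Type u} [TopologicalSpace Y]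

theorem tightness_le {τ : Cardinal.{u}} (hτ : ℵ₀ ≤ τ)
    (h : ∀ (A : Set Y) (y : Y), y ∈ closure A → ∃ B ⊆ A, #B ≤ τ ∧ y ∈ closure B) :
    tightness Y ≤ τ :=
  csInf_le' ⟨hτ, h⟩

theorem exists_subset_mk_le_tightness {A : Set Y} {y : Y} (hy : y ∈ closure A) :
    ∃ B ⊆ A, #B ≤ tightness Y ∧ y ∈ closure B := by
  have hne : ∃ τ : Cardinal.{u}, ℵ₀ ≤ τ ∧ ∀ (A : Set Y) (y : Y), y ∈ closure A →
      ∃ B ⊆ A, #B ≤ τ ∧ y ∈ closure B :=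
    ⟨ℵ₀ + #Y, le_self_add, fun A y hy => ⟨A, subset_rfl, (mk_set_le A).trans le_add_self, hy⟩⟩
  exact (csInf_mem hne).2 A y hy

theorem tightness_le_of_hasBasis {ι : Type w} {p : ι → Prop} {s : Y → ι → Set Y}
    (hb : ∀ y, (𝓝 y).HasBasis p (s y)) {τ : Cardinal.{u}} (hτ : ℵ₀ ≤ τ)
    (hι : lift.{u} #ι ≤ lift.{w} τ) : tightness Y ≤ τ := by
  refine tightness_le hτ fun A y hy => ?_
  have hmeet : ∀ i : {i // p i}, (s y i ∩ A).Nonempty :=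
    fun i => (mem_closure_iff_nhds_basis' (hb y)).1 hy i i.2
  choose z hz using hmeet
  refine ⟨range z, range_subset_iff.2 fun i => (hz i).2, ?_, ?_⟩
  · refine lift_le.{w}.1 (mk_range_le_lift.trans ?_)
    exact (lift_le.2 (mk_subtype_le _)).trans hι
  · exact (mem_closure_iff_nhds_basis' (hb y)).2 fun i hi =>
      ⟨z ⟨i, hi⟩, (hz ⟨i, hi⟩).1, mem_range_self _⟩

theorem tightness_le_aleph0 [Countable Y] : tightness Y ≤ ℵ₀ :=
  tightness_le le_rfl fun A _ hy => ⟨A, subset_rfl, mk_le_aleph0, hy⟩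

theorem aleph_one_le_tightness {A : Set Y} {y : Y} (hy : y ∈ closure A)
    (hA : ∀ B ⊆ A, B.Countable → y ∉ closure B) : ℵ₁ ≤ tightness Y := by
  by_contra! hlt
  obtain ⟨B, hBA, hB, hyB⟩ := exists_subset_mk_le_tightness hy
  exact hA B hBA (le_aleph0_iff_set_countable.1 (hB.trans (lt_aleph_one_iff.1 hlt))) hyB

end Tightness

section WeakTightness

variable {X : Type u} [TopologicalSpace X]

theorem kClosure_eq_univ_of_dense {μ : Cardinal.{u}} {C : Set X} (hC : Dense C) (hμ : #C ≤ μ) :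
    kClosure μ C = Set.univ :=
  eq_univ_of_forall fun x => mem_biUnion ⟨subset_rfl, hμ⟩ (hC x)

theorem IsWeakTightnessWitness.weakTightness_eq_aleph0 {𝒞 : Set (Set X)}
    (h : IsWeakTightnessWitness X ℵ₀ 𝒞) :
    weakTightness X = ℵ₀ :=
  le_antisymm (csInf_le' ⟨le_rfl, 𝒞, h⟩) (le_csInf ⟨ℵ₀, le_rfl, 𝒞, h⟩ fun _ hκ => hκ.1)

theorem weakTightness_eq_aleph0_of_separableSpace [SeparableSpace X] (hX : #X ≤ 2 ^ ℵ₀) :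
    weakTightness X = ℵ₀ := by
  obtain ⟨D, hDc, hDd⟩ := exists_countable_dense X
  refine IsWeakTightnessWitness.weakTightness_eq_aleph0 (𝒞 := range fun x => insert x D)
    ⟨?_, ?_, ?_⟩
  · exact eq_univ_of_forall fun x => ⟨insert x D, mem_range_self x, mem_insert x D⟩
  · exact mk_range_le.trans hX
  · rintro _ ⟨x, rfl⟩
    have := (hDc.insert x).to_subtype
    exact ⟨tightness_le_aleph0, kClosure_eq_univ_of_dense (hDd.mono (subset_insert x D))
      (mk_le_aleph0.trans (cantor ℵ₀).le)⟩

end WeakTightness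

theorem Finset.exists_injOn_restrict {α β γ : Type*} {f : α → β → γ} (hf : Function.Injective f)
    (F : Finset α) : ∃ S : Finset β, InjOn (fun a => S.restrict (f a)) F := by
  classical
  have hsep : ∀ p ∈ F.offDiag, ∃ b, f p.1 b ≠ f p.2 b := fun p hp =>
    Function.ne_iff.1 (hf.ne (Finset.mem_offDiag.1 hp).2.2)
  choose b hb using hsep
  refine ⟨F.offDiag.attach.image fun p => b p.1 p.2, fun a ha a' ha' heq => ?_⟩
  by_contra hne
  have hp : (a, a') ∈ F.offDiag := Finset.mem_offDiag.2 ⟨ha, ha', hne⟩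
  exact hb _ hp (congrFun heq ⟨b _ hp, Finset.mem_image_of_mem _ (Finset.mem_attach _ ⟨_, hp⟩)⟩)

section DiscreteProduct

variable {I : Type u} {E : Type v} [TopologicalSpace E] [DiscreteTopology E]

theorem hasBasis_nhds_pi_discrete (x : I → E) :
    (𝓝 x).HasBasis (fun _ : Finset I => True) fun F => {z | ∀ i ∈ F, z i = x i} := by
  rw [nhds_pi, nhds_discrete]
  exact (hasBasis_pi_pure x).to_hasBasis (fun J hJ => ⟨hJ.toFinset, trivial, by simp⟩)
    fun F _ => ⟨F, F.finite_toSet, subset_rfl⟩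

theorem tightness_pi_discrete_le [Infinite I] : tightness (I → E) ≤ lift.{v} #I :=
  tightness_le_of_hasBasis hasBasis_nhds_pi_discrete (by simp) (by simp [mk_finset_of_infinite])

theorem aleph_one_le_tightness_pi_discrete [Uncountable I] [Nontrivial E] :
    ℵ₁ ≤ tightness (I → E) := by
  obtain ⟨a, b, hab⟩ := exists_pair_ne E
  refine aleph_one_le_tightness (A := {z | {i | z i ≠ a}.Finite}) (y := fun _ => b) ?_ ?_
  · classical
    refine (mem_closure_iff_nhds_basis (hasBasis_nhds_pi_discrete _)).2 fun F _ => ?_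
    refine ⟨fun i => if i ∈ F then b else a, F.finite_toSet.subset fun i hi => ?_,
      fun i hi => if_pos hi⟩
    by_contra hiF
    exact hi (if_neg hiF)
  · intro B hBA hB hyB
    set S := ⋃ z ∈ B, {i | z i ≠ a}
    have hS : S.Countable := hB.biUnion fun z hz => (hBA hz).countable
    obtain ⟨i₀, hi₀⟩ : Sᶜ.Nonempty := nonempty_compl.2 fun h => not_countable_univ (h ▸ hS)
    obtain ⟨z, hzB, hz⟩ :=
      (mem_closure_iff_nhds_basis (hasBasis_nhds_pi_discrete _)).1 hyB {i₀} trivial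
    exact hi₀ (mem_biUnion hzB (ne_of_eq_of_ne (hz i₀ (Finset.mem_singleton_self i₀)) hab.symm))

/-- Hewitt–Marczewski–Pondiczery: coding `I` into the Cantor space `ℕ → Bool`, the functions
factoring through finitely many coordinates of the code form a countable dense set. -/
theorem separableSpace_pi_of_mk_le_continuum [Countable E] [Nonempty E] (hI : #I ≤ 𝔠) :
    SeparableSpace (I → E) := by
  obtain ⟨e⟩ : Nonempty (I ↪ (ℕ → Bool)) := lift_mk_le'.1 (by simpa using hI)
  let Φ : (Σ S : Finset ℕ, (S → Bool) → E) → I → E := fun g i => g.2 (g.1.restrict (e i))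
  refine ⟨range Φ, countable_range Φ, fun x => ?_⟩
  refine (mem_closure_iff_nhds_basis (hasBasis_nhds_pi_discrete x)).2 fun F _ => ?_
  obtain ⟨S, hS⟩ := F.exists_injOn_restrict e.injective
  obtain ⟨g, hg⟩ : ∃ g : (S → Bool) → E, ∀ i : (F : Set I), g (S.restrict (e i)) = x i :=
    ⟨_, hS.injective.extend_apply ((F : Set I).domRestrict x) fun _ => Classical.arbitrary E⟩
  exact ⟨Φ ⟨S, g⟩, mem_range_self _, fun i hi => hg ⟨i, hi⟩⟩

end DiscreteProduct

/-- Under `2^ℵ₀ = 2^ℵ₁`, the Cantor cube `2^{ω₁}` has weak tightness `ℵ₀`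
and tightness `ℵ₁`; in particular it is a compact Hausdorff topological group with
`wt(X) < t(X)`. -/
theorem cantorCube_weaklyCountablyTight_of_continuum_eq
    (hch : (2 : Cardinal.{u}) ^ ℵ₀ = 2 ^ aleph 1)
    (I : Type u) (hI : #I = aleph 1) :
    weakTightness (I → ZMod 2) = ℵ₀ ∧ tightness (I → ZMod 2) = aleph 1 ∧
    CompactSpace (I → ZMod 2) ∧ T2Space (I → ZMod 2) ∧
    IsTopologicalAddGroup (I → ZMod 2) ∧
    weakTightness (I → ZMod 2) < tightness (I → ZMod 2) := by
  have : Uncountable I := aleph0_lt_mk_iff.1 (hI ▸ aleph0_lt_aleph_one)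
  have : SeparableSpace (I → ZMod 2) :=
    separableSpace_pi_of_mk_le_continuum (hI.trans_le aleph_one_le_continuum)
  have hw : weakTightness (I → ZMod 2) = ℵ₀ :=
    weakTightness_eq_aleph0_of_separableSpace (by simp [hI, hch])
  have ht : tightness (I → ZMod 2) = ℵ₁ :=
    le_antisymm (by simpa [hI] using tightness_pi_discrete_le (I := I) (E := ZMod 2))
      aleph_one_le_tightness_pi_discrete
  refine ⟨hw, ht, inferInstance, inferInstance, inferInstance, ?_⟩
  rw [hw, ht]
  exact aleph0_lt_aleph_one
end
end

section
/- If X is a Hausdorff topological space, then |X| ≤ 2^{L(X)·wt(X)·ψ(X)}. -/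
open Cardinal Set Topology
universe u
noncomputable section

/-! Put `κ = L(X)·wt(X)·ψ(X)`. In a Hausdorff space with `L(X), ψ(X) ≤ κ`, every point is the
intersection of the closures of at most `κ` of its open neighbourhoods; hence the closure of a set
of size `≤ κ`, and so the `κ`-closure of a set of size `≤ 2^κ`, has size `≤ 2^κ`.

Let `𝒞` witness `wt(X) ≤ κ`. Closing off along a chain of length `κ⁺` gives `H` with `|H| ≤ 2^κ`
such that each point of `H` lies in the closure of every trace `H ∩ C`, `C ∈ 𝒞`, and such that `H`
meets `C \ ⋃ {cl W : W ∈ 𝒱}` whenever this set is nonempty and `𝒱` consists of at most `κ` of the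
chosen neighbourhoods of points in the closure of a small subset of `H`. If some `q ∉ cl_κ H`,
cover `cl_κ H` by chosen neighbourhoods whose closures miss `q`, and the rest of `X` by the sets
`X \ cl (H ∩ C)` (the tightness of `C` puts `C ∩ cl (H ∩ C)` inside `cl_κ H`). A subcover of size
`κ` leaves uncovered the point of `H` that was chosen for its first part and for a `C ∋ q`.
Hence `X = cl_κ H`, of size `≤ 2^κ`. -/

namespace Cardinal

theorem two_pow_pow_self {κ : Cardinal.{u}} (hκ : ℵ₀ ≤ κ) :
    ((2 : Cardinal.{u}) ^ κ) ^ κ = 2 ^ κ := by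
  rw [← power_mul, mul_eq_self hκ]

theorem mk_biUnion_le_of_mk_le {ι α : Type u} {μ : Cardinal.{u}} (hμ : ℵ₀ ≤ μ) {s : Set ι}
    {f : ι → Set α} (hs : #s ≤ μ) (hf : ∀ i ∈ s, #(f i) ≤ μ) : #(⋃ i ∈ s, f i) ≤ μ :=
  (mk_biUnion_le f s).trans <|
    (mul_le_mul' hs (ciSup_le' fun i : s => hf i.1 i.2)).trans (mul_eq_self hμ).le

theorem mk_iUnion_le_of_mk_le {ι α : Type u} {μ : Cardinal.{u}} (hμ : ℵ₀ ≤ μ) {f : ι → Set α}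
    (hι : #ι ≤ μ) (hf : ∀ i, #(f i) ≤ μ) : #(⋃ i, f i) ≤ μ :=
  (mk_iUnion_le f).trans <| (mul_le_mul' hι (ciSup_le' hf)).trans (mul_eq_self hμ).le

theorem mk_bounded_subset_le_two_pow {α : Type u} {κ : Cardinal.{u}} (hκ : ℵ₀ ≤ κ) {s : Set α}
    (hs : #s ≤ 2 ^ κ) : #{t : Set α // t ⊆ s ∧ #t ≤ κ} ≤ 2 ^ κ :=
  (mk_bounded_subset_le s κ).trans <| (power_le_power_right
    (max_le hs (hκ.trans (cantor κ).le))).trans (two_pow_pow_self hκ).le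

end Cardinal

section Invariants

variable {X : Type u} [TopologicalSpace X]

theorem mem_kClosure_iff {μ : Cardinal.{u}} {A : Set X} {x : X} :
    x ∈ kClosure μ A ↔ ∃ B ⊆ A, #B ≤ μ ∧ x ∈ closure B := by
  simp [kClosure, and_assoc]

theorem kClosure_mono {μ μ' : Cardinal.{u}} (hμ : μ ≤ μ') {A A' : Set X} (hA : A ⊆ A') :
    kClosure μ A ⊆ kClosure μ' A' := by
  intro x hx
  obtain ⟨B, hBA, hB, hxB⟩ := mem_kClosure_iff.1 hx
  exact mem_kClosure_iff.2 ⟨B, hBA.trans hA, hB.trans hμ, hxB⟩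

theorem exists_subset_card_le_tightness {Y : Type u} [TopologicalSpace Y] {A : Set Y} {y : Y}
    (hy : y ∈ closure A) : ∃ B ⊆ A, #B ≤ tightness Y ∧ y ∈ closure B :=
  (csInf_mem (s := {τ : Cardinal.{u} | ℵ₀ ≤ τ ∧ ∀ (A : Set Y) (y : Y), y ∈ closure A →
      ∃ B ⊆ A, #B ≤ τ ∧ y ∈ closure B})
    ⟨max ℵ₀ #Y, le_max_left _ _, fun A _ hy =>
      ⟨A, subset_rfl, (mk_set_le A).trans (le_max_right _ _), hy⟩⟩).2 A y hy

theorem mem_kClosure_of_tightness_le {κ : Cardinal.{u}} {C A : Set X} (hC : tightness C ≤ κ)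
    (hAC : A ⊆ C) {z : X} (hzC : z ∈ C) (hz : z ∈ closure A) : z ∈ kClosure κ A := by
  have himage : Subtype.val '' (Subtype.val ⁻¹' A : Set C) = A := by
    rw [Subtype.image_preimage_coe, inter_eq_right.2 hAC]
  obtain ⟨B, hBA, hB, hzB⟩ := exists_subset_card_le_tightness (y := (⟨z, hzC⟩ : C))
    (A := Subtype.val ⁻¹' A) (by rwa [closure_subtype, himage])
  exact mem_kClosure_iff.2 ⟨Subtype.val '' B, himage ▸ image_mono hBA,
    mk_image_le.trans (hB.trans hC), closure_subtype.1 hzB⟩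

theorem lindelofDegree_spec :
    ℵ₀ ≤ lindelofDegree X ∧ ∀ 𝒰 : Set (Set X), (∀ U ∈ 𝒰, IsOpen U) →
      ⋃₀ 𝒰 = Set.univ → ∃ 𝒱 ⊆ 𝒰, #𝒱 ≤ lindelofDegree X ∧ ⋃₀ 𝒱 = Set.univ :=
  show lindelofDegree X ∈ _ from csInf_mem ⟨max ℵ₀ (2 ^ #X), le_max_left _ _, fun 𝒰 _ h𝒰 =>
    ⟨𝒰, subset_rfl, ((mk_set_le 𝒰).trans mk_set.le).trans (le_max_right _ _), h𝒰⟩⟩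

theorem exists_card_le_iUnion_eq_univ {κ : Cardinal.{u}} (hL : lindelofDegree X ≤ κ)
    {ι : Type u} (U : ι → Set X) (hU : ∀ i, IsOpen (U i)) (hcov : ⋃ i, U i = Set.univ) :
    ∃ J : Set ι, #J ≤ κ ∧ ⋃ i ∈ J, U i = Set.univ := by
  obtain ⟨𝒱, h𝒱U, h𝒱, h𝒱cov⟩ := lindelofDegree_spec.2 (range U)
    (forall_mem_range.2 hU) (sUnion_range U ▸ hcov)
  choose i hi using fun V : 𝒱 => h𝒱U V.2
  refine ⟨range i, mk_range_le.trans (h𝒱.trans hL), eq_univ_of_forall fun x => ?_⟩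
  obtain ⟨V, hV, hxV⟩ := mem_sUnion.1 (h𝒱cov ▸ mem_univ x)
  exact mem_biUnion (mem_range_self ⟨V, hV⟩) ((hi ⟨V, hV⟩).symm ▸ hxV)

theorem pseudoCharacter_spec [T1Space X] :
    ℵ₀ ≤ pseudoCharacter X ∧ ∀ x : X, ∃ 𝒰 : Set (Set X), #𝒰 ≤ pseudoCharacter X ∧
      (∀ U ∈ 𝒰, IsOpen U) ∧ ⋂₀ 𝒰 = {x} := by
  refine show pseudoCharacter X ∈ _ from csInf_mem ⟨max ℵ₀ #X, le_max_left _ _, fun x =>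
    ⟨(fun y => ({y}ᶜ : Set X)) '' {x}ᶜ, ?_, ?_, ?_⟩⟩
  · exact (mk_image_le.trans (mk_set_le _)).trans (le_max_right _ _)
  · exact forall_mem_image.2 fun y _ => isOpen_compl_singleton
  · ext z
    simp only [sInter_image, mem_iInter, mem_compl_iff, mem_singleton_iff]
    exact ⟨fun h => by_contra fun hzx => h z hzx rfl, fun hzx y hyx hzy => hyx (hzy ▸ hzx)⟩

theorem IsWeakTightnessWitness.mono {κ κ' : Cardinal.{u}} (hκ : κ ≤ κ') {𝒞 : Set (Set X)}
    (h𝒞 : IsWeakTightnessWitness X κ 𝒞) : IsWeakTightnessWitness X κ' 𝒞 := by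
  obtain ⟨hcov, hcard, hC⟩ := h𝒞
  have h2κ : (2 : Cardinal.{u}) ^ κ ≤ 2 ^ κ' := power_le_power_left two_ne_zero hκ
  refine ⟨hcov, hcard.trans h2κ, fun C hC𝒞 => ⟨(hC C hC𝒞).1.trans hκ, ?_⟩⟩
  exact eq_univ_of_univ_subset ((hC C hC𝒞).2 ▸ kClosure_mono h2κ subset_rfl)

theorem weakTightness_spec :
    ℵ₀ ≤ weakTightness X ∧ ∃ 𝒞 : Set (Set X), IsWeakTightnessWitness X (weakTightness X) 𝒞 := by
  set κ := max ℵ₀ (tightness (Set.univ : Set X))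
  have h1 : (1 : Cardinal.{u}) ≤ 2 ^ κ :=
    one_le_aleph0.trans ((le_max_left _ _).trans (cantor κ).le)
  refine show weakTightness X ∈ _ from
    csInf_mem ⟨κ, le_max_left _ _, {Set.univ}, sUnion_singleton _, by simpa using h1, ?_⟩
  rintro C rfl
  refine ⟨le_max_right _ _, eq_univ_of_forall fun x => mem_kClosure_iff.2 ?_⟩
  exact ⟨{x}, subset_univ _, by simpa using h1, subset_closure rfl⟩

end Invariants

section CardinalBounds

variable {X : Type u} [TopologicalSpace X] {κ : Cardinal.{u}}

theorem exists_card_le_iInter_closure_subset [T2Space X] (hL : lindelofDegree X ≤ κ) {U : Set X}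
    (hU : IsOpen U) {x : X} (hxU : x ∈ U) : ∃ 𝒟 : Set (Set X), #𝒟 ≤ κ ∧
      (∀ W ∈ 𝒟, IsOpen W ∧ x ∈ W) ∧ ⋂ W ∈ 𝒟, closure W ⊆ U := by
  let ι := {W : Set X // IsOpen W ∧ x ∈ W}
  have hcov : ⋃ W : ι, U ∪ (closure W.1)ᶜ = Set.univ := by
    refine eq_univ_of_forall fun z => mem_iUnion.2 ?_
    by_cases hzU : z ∈ U
    · exact ⟨⟨Set.univ, isOpen_univ, mem_univ x⟩, Or.inl hzU⟩
    obtain ⟨V, W, hV, hW, hzV, hxW, hVW⟩ := t2_separation fun hzx : z = x => hzU (hzx ▸ hxU)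
    exact ⟨⟨W, hW, hxW⟩, Or.inr fun hzW => (hVW.closure_right hV).notMem_of_mem_left hzV hzW⟩
  obtain ⟨J, hJ, hJcov⟩ := exists_card_le_iUnion_eq_univ hL _
    (fun W : ι => hU.union isClosed_closure.isOpen_compl) hcov
  refine ⟨Subtype.val '' J, mk_image_le.trans hJ, forall_mem_image.2 fun W _ => W.2, ?_⟩
  intro z hz
  obtain ⟨W, hWJ, hzW⟩ := mem_iUnion₂.1 (hJcov ▸ mem_univ z)
  exact hzW.resolve_right fun h => h (mem_iInter₂.1 hz W.1 (mem_image_of_mem _ hWJ))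

theorem exists_card_le_iInter_closure_subset_singleton [T2Space X] (hκ : ℵ₀ ≤ κ)
    (hL : lindelofDegree X ≤ κ) (hψ : pseudoCharacter X ≤ κ) (x : X) : ∃ 𝒱 : Set (Set X), #𝒱 ≤ κ ∧
      (∀ W ∈ 𝒱, IsOpen W ∧ x ∈ W) ∧ ⋂ W ∈ 𝒱, closure W ⊆ {x} := by
  obtain ⟨𝒰, h𝒰, h𝒰open, h𝒰x⟩ := pseudoCharacter_spec.2 x
  have hx𝒰 : ∀ U ∈ 𝒰, x ∈ U := fun U hU => (h𝒰x ▸ mem_singleton x : x ∈ ⋂₀ 𝒰) U hU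
  choose! 𝒟 h𝒟 h𝒟x h𝒟U using fun U hU =>
    exists_card_le_iInter_closure_subset hL (h𝒰open U hU) (hx𝒰 U hU)
  refine ⟨⋃ U ∈ 𝒰, 𝒟 U, mk_biUnion_le_of_mk_le hκ (h𝒰.trans hψ) h𝒟,
    fun W hW => ?_, fun z hz => h𝒰x ▸ fun U hU => h𝒟U U hU ?_⟩
  · obtain ⟨U, hU, hWU⟩ := mem_iUnion₂.1 hW
    exact h𝒟x U hU W hWU
  · exact mem_iInter₂.2 fun W hW => mem_iInter₂.1 hz W (mem_biUnion hU hW)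

/-- A point of `closure B` is determined by the traces on `B` of its neighbourhoods in `V`. -/
theorem card_closure_le_two_pow (hκ : ℵ₀ ≤ κ) {V : X → Set (Set X)} (hV : ∀ x, #(V x) ≤ κ)
    (hVopen : ∀ x, ∀ W ∈ V x, IsOpen W ∧ x ∈ W) (hVsep : ∀ x, ⋂ W ∈ V x, closure W ⊆ {x})
    {B : Set X} (hB : #B ≤ κ) :
    #(closure B) ≤ 2 ^ κ := by
  let trace : X → Set (Set X) := fun x => (· ∩ B) '' V x
  have hinj : InjOn trace (closure B) := by
    intro x _ y hy hxy
    refine (hVsep x (mem_iInter₂.2 fun W hW => ?_)).symm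
    obtain ⟨W', hW', hWW'⟩ : W ∩ B ∈ trace y := hxy ▸ mem_image_of_mem _ hW
    have hyW' : y ∈ closure (W' ∩ B) := (hVopen y W' hW').1.inter_closure ⟨(hVopen y W' hW').2, hy⟩
    rw [show W' ∩ B = W ∩ B from hWW'] at hyW'
    exact closure_mono inter_subset_left hyW'
  have hmaps : trace '' closure B ⊆ {𝒮 | 𝒮 ⊆ 𝒫 B ∧ #𝒮 ≤ κ} := by
    rintro _ ⟨x, -, rfl⟩
    exact ⟨forall_mem_image.2 fun W _ => inter_subset_right, mk_image_le.trans (hV x)⟩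
  have hpow : #(𝒫 B) ≤ 2 ^ κ := (mk_powerset B).trans_le (power_le_power_left two_ne_zero hB)
  calc #(closure B) = #(trace '' closure B) := (mk_image_eq_of_injOn _ _ hinj).symm
    _ ≤ #{𝒮 : Set (Set X) // 𝒮 ⊆ 𝒫 B ∧ #𝒮 ≤ κ} := mk_le_mk_of_subset hmaps
    _ ≤ 2 ^ κ := mk_bounded_subset_le_two_pow hκ hpow

theorem card_kClosure_le_two_pow (hκ : ℵ₀ ≤ κ)
    (hcl : ∀ B : Set X, #B ≤ κ → #(closure B) ≤ 2 ^ κ) {A : Set X} (hA : #A ≤ 2 ^ κ) :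
    #(kClosure κ A) ≤ 2 ^ κ :=
  mk_biUnion_le_of_mk_le (hκ.trans (cantor κ).le) (mk_bounded_subset_le_two_pow hκ hA)
    fun B hB => hcl B hB.2

end CardinalBounds

theorem exists_card_le_two_pow_forall_small_subset {Y : Type u} {κ : Cardinal.{u}}
    (hκ : ℵ₀ ≤ κ) (g : Set Y → Set Y) (hg : ∀ T : Set Y, #T ≤ κ → #(g T) ≤ 2 ^ κ) :
    ∃ H : Set Y, #H ≤ 2 ^ κ ∧ ∀ T ⊆ H, #T ≤ κ → g T ⊆ H := by
  let W := (Order.succ κ).ord.ToType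
  let G : Set Y → Set Y := fun A => ⋃ T ∈ {T : Set Y | T ⊆ A ∧ #T ≤ κ}, g T
  obtain ⟨S, hS⟩ : ∃ S : W → Set Y, ∀ w, S w = ⋃ v ∈ Iio w, G (S v) :=
    ⟨_, wellFounded_lt.fix_eq fun w S => ⋃ (v) (h : v < w), G (S v h)⟩
  have h2κ : ℵ₀ ≤ 2 ^ κ := hκ.trans (cantor κ).le
  have hG : ∀ A : Set Y, #A ≤ 2 ^ κ → #(G A) ≤ 2 ^ κ := fun A hA =>
    mk_biUnion_le_of_mk_le h2κ (mk_bounded_subset_le_two_pow hκ hA) fun T hT => hg T hT.2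
  have hW : #W ≤ 2 ^ κ := (mk_ord_toType _).trans_le (Order.succ_le_of_lt (cantor κ))
  have hSκ (w : W) : #(S w) ≤ 2 ^ κ := WellFoundedLT.induction w fun w ih =>
    hS w ▸ mk_biUnion_le_of_mk_le h2κ ((mk_set_le _).trans hW) fun v hv => hG _ (ih v hv)
  refine ⟨⋃ w, G (S w), mk_iUnion_le_of_mk_le h2κ hW fun w => hG _ (hSκ w),
    fun T hT hTκ => ?_⟩
  choose f hf using fun t : T => mem_iUnion.1 (hT t.2)
  -- `κ⁺` is regular, so the `κ` stages at which the points of `T` appear are bounded.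
  have hf_cof : #(range f) < Order.cof W := by
    rw [Ordinal.cof_toType, (isRegular_succ hκ).cof_ord]
    exact mk_range_le.trans_lt (hTκ.trans_lt (Order.lt_succ κ))
  obtain ⟨w, hw⟩ := not_forall.1 fun h : IsCofinal (range f) => (Order.cof_le h).not_gt hf_cof
  have hTS : T ⊆ S w := fun t ht => hS w ▸
    mem_biUnion (lt_of_not_ge fun h => hw ⟨_, mem_range_self ⟨t, ht⟩, h⟩) (hf ⟨t, ht⟩)
  exact subset_iUnion_of_subset w (subset_biUnion_of_mem (u := g) ⟨hTS, hTκ⟩)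

section ClosingOff

variable {X : Type u} [TopologicalSpace X] {κ : Cardinal.{u}}

theorem exists_card_le_two_pow_dense_in_traces [Nonempty X] (hκ : ℵ₀ ≤ κ)
    {V : X → Set (Set X)} (hVκ : ∀ x, #(V x) ≤ κ)
    (hcl : ∀ B : Set X, #B ≤ κ → #(closure B) ≤ 2 ^ κ) {𝒞 : Set (Set X)} (h𝒞κ : #𝒞 ≤ 2 ^ κ)
    (h𝒞 : ∀ C ∈ 𝒞, kClosure (2 ^ κ) C = Set.univ) :
    ∃ H : Set X, #H ≤ 2 ^ κ ∧ (∀ x ∈ H, ∀ C ∈ 𝒞, x ∈ closure (H ∩ C)) ∧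
      ∀ T ⊆ H, #T ≤ κ → ∀ 𝒱 ⊆ ⋃ y ∈ closure T, V y, #𝒱 ≤ κ → ∀ C ∈ 𝒞,
        ¬ C ⊆ ⋃ W ∈ 𝒱, closure W → ¬ H ∩ C ⊆ ⋃ W ∈ 𝒱, closure W := by
  have h2κ : ℵ₀ ≤ 2 ^ κ := hκ.trans (cantor κ).le
  choose! D hDC hDκ hxD using fun x C (hC : C ∈ 𝒞) =>
    mem_kClosure_iff.1 ((h𝒞 C hC) ▸ mem_univ x)
  have hpick (𝒱 : Set (Set X)) (C : Set X) :
      ∃ z, ¬ C ⊆ ⋃ W ∈ 𝒱, closure W → z ∈ C ∧ z ∉ ⋃ W ∈ 𝒱, closure W := by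
    by_cases h : C ⊆ ⋃ W ∈ 𝒱, closure W
    · exact ⟨Classical.arbitrary X, fun h' => (h' h).elim⟩
    · obtain ⟨z, hz⟩ := not_subset.1 h
      exact ⟨z, fun _ => hz⟩
  choose pick hpick using hpick
  let small (T : Set X) := {𝒱 : Set (Set X) | 𝒱 ⊆ ⋃ y ∈ closure T, V y ∧ #𝒱 ≤ κ}
  let g (T : Set X) := (⋃ x ∈ T, ⋃ C ∈ 𝒞, D x C) ∪ ⋃ 𝒱 ∈ small T, ⋃ C ∈ 𝒞, {pick 𝒱 C}
  have hg (T : Set X) (hT : #T ≤ κ) : #(g T) ≤ 2 ^ κ := by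
    have hsmall : #(small T) ≤ 2 ^ κ := mk_bounded_subset_le_two_pow hκ <|
      mk_biUnion_le_of_mk_le h2κ (hcl T hT) fun y _ => (hVκ y).trans (cantor κ).le
    refine (mk_union_le _ _).trans (add_le_of_le h2κ ?_ ?_)
    · exact mk_biUnion_le_of_mk_le h2κ (hT.trans (cantor κ).le) fun x _ =>
        mk_biUnion_le_of_mk_le h2κ h𝒞κ fun C hC => hDκ x C hC
    · exact mk_biUnion_le_of_mk_le h2κ hsmall fun 𝒱 _ => mk_biUnion_le_of_mk_le h2κ h𝒞κ
        fun C _ => (mk_singleton _).trans_le (one_le_aleph0.trans h2κ)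
  obtain ⟨H, hHκ, hH⟩ := exists_card_le_two_pow_forall_small_subset hκ g hg
  refine ⟨H, hHκ, fun x hx C hC => ?_, fun T hTH hTκ 𝒱 h𝒱 h𝒱κ C hC h => ?_⟩
  · have hDH : D x C ⊆ H := fun b hb => hH {x} (singleton_subset_iff.2 hx)
      (by simpa using one_le_aleph0.trans hκ) (Or.inl (mem_biUnion rfl (mem_biUnion hC hb)))
    exact closure_mono (subset_inter hDH (hDC x C hC)) (hxD x C hC)
  · have hpickH : pick 𝒱 C ∈ H :=
      hH T hTH hTκ (Or.inr (mem_biUnion ⟨h𝒱, h𝒱κ⟩ (mem_biUnion hC rfl)))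
    exact not_subset.2 ⟨pick 𝒱 C, ⟨hpickH, (hpick 𝒱 C h).1⟩, (hpick 𝒱 C h).2⟩

theorem kClosure_eq_univ_of_forall_small_family (hκ : ℵ₀ ≤ κ) (hL : lindelofDegree X ≤ κ)
    {V : X → Set (Set X)} (hVopen : ∀ x, ∀ W ∈ V x, IsOpen W ∧ x ∈ W)
    (hVsep : ∀ x, ⋂ W ∈ V x, closure W ⊆ {x}) {𝒞 : Set (Set X)} (h𝒞 : ⋃₀ 𝒞 = Set.univ)
    (ht : ∀ C ∈ 𝒞, tightness C ≤ κ) {H : Set X}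
    (hdense : ∀ x ∈ H, ∀ C ∈ 𝒞, x ∈ closure (H ∩ C))
    (hmeets : ∀ T ⊆ H, #T ≤ κ → ∀ 𝒱 ⊆ ⋃ y ∈ closure T, V y, #𝒱 ≤ κ → ∀ C ∈ 𝒞,
      ¬ C ⊆ ⋃ W ∈ 𝒱, closure W → ¬ H ∩ C ⊆ ⋃ W ∈ 𝒱, closure W) :
    kClosure κ H = Set.univ := by
  refine eq_univ_of_forall fun q => by_contra fun hq => ?_
  have hsep (y : kClosure κ H) : ∃ W ∈ V y, q ∉ closure W := by
    by_contra! h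
    exact hq (hVsep y (mem_iInter₂.2 h) ▸ y.2)
  choose W hWV hqW using hsep
  let U : kClosure κ H ⊕ 𝒞 → Set X := Sum.elim W fun C => (closure (H ∩ C))ᶜ
  have hUcov : ⋃ i, U i = Set.univ := by
    refine eq_univ_of_forall fun z => mem_iUnion.2 ?_
    by_cases hz : z ∈ kClosure κ H
    · exact ⟨.inl ⟨z, hz⟩, (hVopen z _ (hWV ⟨z, hz⟩)).2⟩
    obtain ⟨C, hC, hzC⟩ := mem_sUnion.1 (h𝒞 ▸ mem_univ z)
    exact ⟨.inr ⟨C, hC⟩, fun hzHC => hz <| kClosure_mono le_rfl inter_subset_left <|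
      mem_kClosure_of_tightness_le (ht C hC) inter_subset_right hzC hzHC⟩
  obtain ⟨J, hJ, hJcov⟩ := exists_card_le_iUnion_eq_univ hL U
    (Sum.forall.2 ⟨fun y => (hVopen y _ (hWV y)).1, fun _ => isClosed_closure.isOpen_compl⟩) hUcov
  let Jl : Set (kClosure κ H) := Sum.inl ⁻¹' J
  have hJl : #Jl ≤ κ := (mk_preimage_of_injective _ _ Sum.inl_injective).trans hJ
  choose B hBH hBκ hyB using fun y : Jl => mem_kClosure_iff.1 y.1.2
  let 𝒱 := range fun y : Jl => W y
  have h𝒱 : 𝒱 ⊆ ⋃ y ∈ closure (⋃ y, B y), V y := by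
    rintro _ ⟨y, rfl⟩
    exact mem_biUnion (closure_mono (subset_iUnion B y) (hyB y)) (hWV y)
  have hq𝒱 : q ∉ ⋃ W ∈ 𝒱, closure W := by
    simp only [mem_iUnion₂]
    rintro ⟨_, ⟨y, rfl⟩, hqy⟩
    exact hqW y hqy
  obtain ⟨C, hC, hqC⟩ := mem_sUnion.1 (h𝒞 ▸ mem_univ q)
  obtain ⟨z, ⟨hzH, -⟩, hz𝒱⟩ := not_subset.1 <| hmeets _ (iUnion_subset hBH)
    (mk_iUnion_le_of_mk_le hκ hJl hBκ) 𝒱 h𝒱 (mk_range_le.trans hJl) C hC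
    (not_subset.2 ⟨q, hqC, hq𝒱⟩)
  obtain ⟨i, hiJ, hzi⟩ := mem_iUnion₂.1 (hJcov ▸ mem_univ z)
  rcases i with y | C'
  · exact hz𝒱 (mem_biUnion (mem_range_self (⟨y, hiJ⟩ : Jl)) (subset_closure hzi))
  · exact hzi (hdense z hzH C' C'.2)

end ClosingOff

theorem card_le_two_pow_of_isWeakTightnessWitness {X : Type u} [TopologicalSpace X] [T2Space X]
    {κ : Cardinal.{u}} (hκ : ℵ₀ ≤ κ) (hL : lindelofDegree X ≤ κ) (hψ : pseudoCharacter X ≤ κ)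
    {𝒞 : Set (Set X)} (h𝒞 : IsWeakTightnessWitness X κ 𝒞) : #X ≤ 2 ^ κ := by
  rcases isEmpty_or_nonempty X with hX | hX
  · simp
  obtain ⟨h𝒞cov, h𝒞κ, h𝒞C⟩ := h𝒞
  choose V hVκ hVopen hVsep using exists_card_le_iInter_closure_subset_singleton hκ hL hψ
  have hcl (B : Set X) (hB : #B ≤ κ) := card_closure_le_two_pow hκ hVκ hVopen hVsep hB
  obtain ⟨H, hHκ, hdense, hmeets⟩ :=
    exists_card_le_two_pow_dense_in_traces hκ hVκ hcl h𝒞κ fun C hC => (h𝒞C C hC).2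
  calc #X = #(kClosure κ H) := by
        rw [kClosure_eq_univ_of_forall_small_family hκ hL hVopen hVsep h𝒞cov
          (fun C hC => (h𝒞C C hC).1) hdense hmeets, mk_univ]
    _ ≤ 2 ^ κ := card_kClosure_le_two_pow hκ hcl hHκ

/-- For a Hausdorff space `X`, `|X| ≤ 2^{L(X)·wt(X)·ψ(X)}`. -/
theorem card_le_two_pow_lindelof_weakTightness_psi
    (X : Type u) [TopologicalSpace X] [T2Space X] :
    #X ≤ 2 ^ (lindelofDegree X * weakTightness X * pseudoCharacter X) := by
  obtain ⟨hL, -⟩ := lindelofDegree_spec (X := X)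
  obtain ⟨hwt, 𝒞, h𝒞⟩ := weakTightness_spec (X := X)
  obtain ⟨hψ, -⟩ := pseudoCharacter_spec (X := X)
  have hne {c : Cardinal.{u}} (hc : ℵ₀ ≤ c) : c ≠ 0 := (aleph0_pos.trans_le hc).ne'
  have hLκ : lindelofDegree X ≤ lindelofDegree X * weakTightness X * pseudoCharacter X :=
    (Cardinal.le_mul_right (hne hwt)).trans (Cardinal.le_mul_right (hne hψ))
  have hwtκ : weakTightness X ≤ lindelofDegree X * weakTightness X * pseudoCharacter X :=
    (Cardinal.le_mul_left (hne hL)).trans (Cardinal.le_mul_right (hne hψ))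
  exact card_le_two_pow_of_isWeakTightnessWitness (hL.trans hLκ) hLκ
    (Cardinal.le_mul_left (mul_ne_zero (hne hL) (hne hwt))) (h𝒞.mono hwtκ)
end
end
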